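/- arXiv:1301.0070 — 2 statements merged into one kernel-verified Lean document; each statement's English description precedes it below -/
import Mathlib

section
/- Let q = 2^m with m ≥ 1 and let n be an odd positive integer. Let L(x) = ∑_{i=0}^{N} b_i x^{2^i} be a linearized polynomial with all coefficients b_i ∈ F_q, and assume that the map y ↦ y·L(y) is a bijection of F_q. Then for every a ∈ F_q with a ≠ 0, the polynomial F(x) = x·(L(Tr(x)) + a·Tr(x) + a·x) is a permutation polynomial of F_{q^n}, i.e. the map x ↦ x·(L(Tr(x)) + a·Tr(x) + a·x) is a bijection of F_{q^n}. -/
/-- The trace map from `F_{q^n}` to `F_q`: `Tr(x) = ∑_{i=0}^{n-1} x^{q^i}`. -/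
def fieldTr {K : Type*} [Field K] (q n : ℕ) (x : K) : K :=
  ∑ i ∈ Finset.range n, x ^ q ^ i

/-- The linearized polynomial `L(x) = ∑_{i=0}^{N} b_i x^{2^i}`. -/
def linPoly {K : Type*} [Field K] (N : ℕ) (b : ℕ → K) (x : K) : K :=
  ∑ i ∈ Finset.range (N + 1), b i * x ^ 2 ^ i


/-!
In characteristic 2 the trace of `F(x) = x·(L(t) + a·t + a·x)`, where `t = Tr(x)`, is
`t·L(t) + a·t² + a·Tr(x²) = t·L(t)`, because `Tr(x²) = t²`. Hence `F(x) = F(y)` forces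
`Tr(x) = Tr(y)`, as `y ↦ y·L(y)` is injective on `F_q`. With `t` common and `c = L(t) + a·t`,
the equation `x·(c + a·x) = y·(c + a·y)` factors as `(x + y)·(c + a·(x + y)) = 0`; if `x ≠ y`
then `x + y = c/a` lies in `F_q`, so (as `n` is odd) it equals its own trace
`Tr(x) + Tr(y) = 2·Tr(x) = 0`, a contradiction.
-/

section Frobenius

lemma pow_pow_pow_eq_self {M : Type*} [Monoid M] {q : ℕ} {c : M} (hc : c ^ q = c) (i : ℕ) :
    c ^ q ^ i = c := by
  induction i with
  | zero => simp
  | succ k ih => rw [pow_succ, pow_mul, ih, hc]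

variable {K : Type*} [Field K]

lemma fieldTr_of_pow_eq_self {q : ℕ} (n : ℕ) {c : K} (hc : c ^ q = c) :
    fieldTr q n c = n • c := by
  simp [fieldTr, pow_pow_pow_eq_self hc]

lemma fieldTr_mul_of_pow_eq_self {q : ℕ} (n : ℕ) {c : K} (hc : c ^ q = c) (x : K) :
    fieldTr q n (c * x) = c * fieldTr q n x := by
  simp only [fieldTr, Finset.mul_sum, mul_pow, pow_pow_pow_eq_self hc]

variable {p : ℕ} [ExpChar K p]

lemma fieldTr_add (m n : ℕ) (x y : K) :
    fieldTr (p ^ m) n (x + y) = fieldTr (p ^ m) n x + fieldTr (p ^ m) n y := by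
  simp only [fieldTr, ← Finset.sum_add_distrib, ← pow_mul, add_pow_expChar_pow]

lemma fieldTr_pow_char (q n : ℕ) (x : K) : fieldTr q n (x ^ p) = fieldTr q n x ^ p := by
  simp only [fieldTr, sum_pow_char, ← pow_mul, mul_comm p]

lemma fieldTr_pow_eq_self {m n : ℕ} {x : K} (hx : x ^ (p ^ m) ^ n = x) :
    fieldTr (p ^ m) n x ^ p ^ m = fieldTr (p ^ m) n x := by
  have hshift := (Finset.sum_range_succ' (fun i => x ^ (p ^ m) ^ i) n).symm.trans
    (Finset.sum_range_succ _ n)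
  rw [hx, pow_zero, pow_one] at hshift
  rw [fieldTr, sum_pow_char_pow]
  simp only [← pow_mul x, ← pow_succ]
  exact add_right_cancel hshift

lemma linPoly_pow_eq_self {m N : ℕ} {b : ℕ → K} (hb : ∀ i ≤ N, b i ^ p ^ m = b i) {t : K}
    (ht : t ^ p ^ m = t) : linPoly N b t ^ p ^ m = linPoly N b t := by
  rw [linPoly, sum_pow_char_pow]
  refine Finset.sum_congr rfl fun i hi => ?_
  rw [mul_pow, hb i (Nat.lt_succ_iff.mp (Finset.mem_range.mp hi)), ← pow_mul, mul_comm (2 ^ i),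
    pow_mul, ht]

end Frobenius

section CharTwo

variable {K : Type*} [Field K] [CharP K 2]

/-- The two terms `a·Tr(x)·x` and `a·x²` of the product have the same trace `a·Tr(x)²`. -/
lemma fieldTr_mul_add_mul_fieldTr_add_mul {m n : ℕ} {x c a : K} (hx : x ^ (2 ^ m) ^ n = x)
    (hc : c ^ 2 ^ m = c) (ha : a ^ 2 ^ m = a) :
    fieldTr (2 ^ m) n (x * (c + a * fieldTr (2 ^ m) n x + a * x))
      = fieldTr (2 ^ m) n x * c := by
  set t := fieldTr (2 ^ m) n x
  have hd : (c + a * t) ^ 2 ^ m = c + a * t := by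
    rw [add_pow_expChar_pow, mul_pow, hc, ha, fieldTr_pow_eq_self hx]
  have hsplit : x * (c + a * t + a * x) = (c + a * t) * x + a * x ^ 2 := by ring
  rw [hsplit, fieldTr_add, fieldTr_mul_of_pow_eq_self n hd, fieldTr_mul_of_pow_eq_self n ha,
    fieldTr_pow_char]
  linear_combination (a * t ^ 2) * CharTwo.two_eq_zero (R := K)

lemma fieldTr_of_pow_eq_self_of_odd {q n : ℕ} (hn : Odd n) {c : K} (hc : c ^ q = c) :
    fieldTr q n c = c := by
  rw [fieldTr_of_pow_eq_self n hc, nsmul_eq_mul, CharTwo.natCast_eq_ite, if_neg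
    (Nat.not_even_iff_odd.mpr hn), one_mul]

lemma eq_or_mul_add_eq_of_mul_add_mul_eq {x y c a : K}
    (h : x * (c + a * x) = y * (c + a * y)) : x = y ∨ a * (x + y) = c := by
  have hfactor : (x + y) * (a * (x + y) + c) = 0 := by
    linear_combination h + (a * x * y + a * y ^ 2 + c * y) * CharTwo.two_eq_zero (R := K)
  rcases mul_eq_zero.mp hfactor with hxy | hc
  · exact Or.inl (CharTwo.add_eq_zero.mp hxy)
  · exact Or.inr (CharTwo.add_eq_zero.mp hc)

lemma eq_of_fieldTr_eq_of_mul_add_mul_eq {m n : ℕ} (hn : Odd n) {x y c a : K}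
    (hc : c ^ 2 ^ m = c) (ha : a ^ 2 ^ m = a) (ha0 : a ≠ 0)
    (htr : fieldTr (2 ^ m) n x = fieldTr (2 ^ m) n y) (h : x * (c + a * x) = y * (c + a * y)) :
    x = y := by
  rcases eq_or_mul_add_eq_of_mul_add_mul_eq h with hxy | hsum
  · exact hxy
  have hquot : x + y = a⁻¹ * c := by rw [← hsum, inv_mul_cancel_left₀ ha0]
  have hfix : (x + y) ^ 2 ^ m = x + y := by rw [hquot, mul_pow, inv_pow, ha, hc]
  rw [← CharTwo.add_eq_zero, ← fieldTr_of_pow_eq_self_of_odd hn hfix, fieldTr_add, htr,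
    CharTwo.add_self_eq_zero]

end CharTwo

theorem generalized_bilinear_permutation_general (m n : ℕ) (hn : Odd n)
    (K : Type*) [Field K] [Fintype K] (hcard : Fintype.card K = 2 ^ (m * n))
    (N : ℕ) (b : ℕ → K) (hb : ∀ i ≤ N, b i ^ 2 ^ m = b i)
    (hLperm : Set.BijOn (fun y : K => y * linPoly N b y)
      {y : K | y ^ 2 ^ m = y} {y : K | y ^ 2 ^ m = y})
    (a : K) (haF : a ^ 2 ^ m = a) (ha0 : a ≠ 0) :
    Function.Bijective (fun x : K =>
      x * (linPoly N b (fieldTr (2 ^ m) n x) + a * fieldTr (2 ^ m) n x + a * x)) := by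
  have : CharP K 2 := charP_of_card_eq_prime_pow hcard
  have hfrob : ∀ x : K, x ^ (2 ^ m) ^ n = x := fun x => by
    rw [← pow_mul, ← hcard, FiniteField.pow_card]
  have htrF : ∀ z : K, fieldTr (2 ^ m) n
      (z * (linPoly N b (fieldTr (2 ^ m) n z) + a * fieldTr (2 ^ m) n z + a * z))
      = fieldTr (2 ^ m) n z * linPoly N b (fieldTr (2 ^ m) n z) := fun z => by
    rw [fieldTr_mul_add_mul_fieldTr_add_mul (hfrob z)
      (linPoly_pow_eq_self hb (fieldTr_pow_eq_self (hfrob z))) haF, mul_comm]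
  rw [← Finite.injective_iff_bijective]
  intro x y hxy
  beta_reduce at hxy
  have htr : fieldTr (2 ^ m) n x = fieldTr (2 ^ m) n y :=
    hLperm.injOn (fieldTr_pow_eq_self (hfrob x)) (fieldTr_pow_eq_self (hfrob y))
      (by rw [← htrF, ← htrF, hxy])
  set t := fieldTr (2 ^ m) n y
  have ht : t ^ 2 ^ m = t := fieldTr_pow_eq_self (hfrob y)
  have hc : (linPoly N b t + a * t) ^ 2 ^ m = linPoly N b t + a * t := by
    rw [add_pow_expChar_pow, mul_pow, haF, linPoly_pow_eq_self hb ht, ht]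
  rw [htr] at hxy
  exact eq_of_fieldTr_eq_of_mul_add_mul_eq hn hc haF ha0 htr hxy

/-- Theorem (Laigle-Chapuy): let `q = 2^m`, `n` odd, `L` a linearized polynomial with
coefficients in `F_q` such that `y ↦ y·L(y)` permutes `F_q`, and `a ∈ F_q^*`. Then
`F(x) = x·(L(Tr(x)) + a·Tr(x) + a·x)` is a permutation polynomial of `F_{q^n}`. -/
theorem generalized_bilinear_permutation (m n : ℕ) (hm : 1 ≤ m) (hn : Odd n)
    (K : Type*) [Field K] [Fintype K] (hcard : Fintype.card K = 2 ^ (m * n))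
    (N : ℕ) (b : ℕ → K) (hb : ∀ i ≤ N, b i ^ 2 ^ m = b i)
    (hLperm : Set.BijOn (fun y : K => y * linPoly N b y)
      {y : K | y ^ 2 ^ m = y} {y : K | y ^ 2 ^ m = y})
    (a : K) (haF : a ^ 2 ^ m = a) (ha0 : a ≠ 0) :
    Function.Bijective (fun x : K =>
      x * (linPoly N b (fieldTr (2 ^ m) n x) + a * fieldTr (2 ^ m) n x + a * x)) :=
  generalized_bilinear_permutation_general m n hn K hcard N b hb hLperm a haF ha0
end

section
/- Let q = 2^m with m ≥ 1, let n be an odd positive integer, and let c ∈ F_q with c ≠ 0. Then the map P_c(x) = x^2 + c·x maps ker Tr = {x ∈ F_{q^n} : Tr(x) = 0} bijectively onto ker Tr, and the map Q(x) = ∑_{j=0}^{m-1} c^{-(2^{j+1}-1)} · ( ∑_{k=0}^{(n-1)/2} x^{q^{2k}} )^{2^j} satisfies Q(P_c(x)) = x for all x ∈ ker Tr; that is, Q is the compositional inverse of the permutation of ker Tr induced by P_c. -/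
/-!
The Frobenius `x ↦ x ^ q` is additive and fixes `c`, so every sum `L` of Frobenius powers
satisfies `L (x² + c x) = L(x)² + c L(x)`; for `L = Tr` this shows that `P_c` preserves `ker Tr`.
For `S(x) = ∑_{k ≤ (n-1)/2} x^{q^{2k}}` the oddness of `n` gives `S(x) + S(x)^q = Tr(x) + x`.
With `y = S(x)/c`, the sum `Q(P_c x) = c ∑_j (y² + y)^{2^j}` telescopes to
`c (y^q + y) = S(x)^q + S(x)`, which is `x` on `ker Tr`. So `Q` is a left inverse of `P_c` there,
and an injective self-map of a finite set is bijective.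
-/

open Finset

theorem pow_pow_eq_self_of_pow_eq_self {M : Type*} [Monoid M] {c : M} {q : ℕ} (hc : c ^ q = c)
    (i : ℕ) : c ^ q ^ i = c := by
  induction i with
  | zero => rw [pow_zero, pow_one]
  | succ i ih => rw [pow_succ, pow_mul, ih, hc]

section ExpChar

variable {R : Type*} [CommRing R] {p : ℕ} [ExpChar R p]

theorem sum_range_pow_sub_self_pow_expChar_pow (y : R) (m : ℕ) :
    ∑ j ∈ range m, (y ^ p - y) ^ p ^ j = y ^ p ^ m - y := by
  have telescope (j : ℕ) : (y ^ p - y) ^ p ^ j = y ^ p ^ (j + 1) - y ^ p ^ j := by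
    rw [sub_pow_expChar_pow, ← pow_mul, pow_succ']
  simp_rw [telescope]
  rw [sum_range_sub (fun j => y ^ p ^ j), pow_zero, pow_one]

theorem pow_add_mul_pow_pow {c : R} {m : ℕ} (hc : c ^ p ^ m = c) (k : ℕ) (x : R) :
    (x ^ p + c * x) ^ (p ^ m) ^ k = (x ^ (p ^ m) ^ k) ^ p + c * x ^ (p ^ m) ^ k := by
  have hq : (p ^ m) ^ k = p ^ (m * k) := (pow_mul ..).symm
  rw [hq, add_pow_expChar_pow, mul_pow, ← hq, pow_pow_eq_self_of_pow_eq_self hc]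
  ring

theorem sum_pow_add_mul_pow_pow {ι : Type*} {c : R} {m : ℕ} (hc : c ^ p ^ m = c)
    (s : Finset ι) (e : ι → ℕ) (x : R) :
    ∑ i ∈ s, (x ^ p + c * x) ^ (p ^ m) ^ e i
      = (∑ i ∈ s, x ^ (p ^ m) ^ e i) ^ p + c * ∑ i ∈ s, x ^ (p ^ m) ^ e i := by
  rw [sum_pow_char, mul_sum, ← sum_add_distrib]
  exact sum_congr rfl fun i _ => pow_add_mul_pow_pow hc (e i) x

theorem fieldTr_pow_add_mul {K : Type*} [Field K] [ExpChar K p] {c : K} {m : ℕ}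
    (hc : c ^ p ^ m = c) (n : ℕ) (x : K) :
    fieldTr (p ^ m) n (x ^ p + c * x) = fieldTr (p ^ m) n x ^ p + c * fieldTr (p ^ m) n x :=
  sum_pow_add_mul_pow_pow hc (range n) id x

theorem sum_even_add_pow_eq_sum_range (x : R) (m N : ℕ) :
    ∑ k ∈ range N, x ^ (p ^ m) ^ (2 * k) + (∑ k ∈ range N, x ^ (p ^ m) ^ (2 * k)) ^ p ^ m
      = ∑ i ∈ range (2 * N), x ^ (p ^ m) ^ i := by
  induction N with
  | zero => simp [zero_pow (expChar_pow_pos R p m).ne']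
  | succ N ih =>
    have frob : (x ^ (p ^ m) ^ (2 * N)) ^ p ^ m = x ^ (p ^ m) ^ (2 * N + 1) := by
      rw [← pow_mul, ← pow_succ]
    rw [sum_range_succ, add_pow_expChar_pow, frob, Nat.mul_succ,
      sum_range_succ, sum_range_succ, ← ih]
    abel

end ExpChar

theorem sum_even_add_pow_eq_fieldTr_add {K : Type*} [Field K] {p : ℕ} [ExpChar K p] {m n : ℕ}
    (hn : Odd n) {x : K} (hx : x ^ (p ^ m) ^ n = x) :
    ∑ k ∈ range ((n - 1) / 2 + 1), x ^ (p ^ m) ^ (2 * k)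
        + (∑ k ∈ range ((n - 1) / 2 + 1), x ^ (p ^ m) ^ (2 * k)) ^ p ^ m
      = fieldTr (p ^ m) n x + x := by
  obtain ⟨N, rfl⟩ := hn
  rw [sum_even_add_pow_eq_sum_range, show 2 * ((2 * N + 1 - 1) / 2 + 1) = 2 * N + 1 + 1 by omega,
    sum_range_succ, hx]
  rfl

theorem inv_pow_sub_one_mul_pow {K : Type*} [Field K] {c : K} (hc : c ≠ 0) {k : ℕ} (hk : k ≠ 0) :
    c⁻¹ ^ (k - 1) * c ^ k = c := by
  obtain ⟨l, rfl⟩ := Nat.exists_eq_succ_of_ne_zero hk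
  rw [Nat.succ_sub_one, pow_succ, ← mul_assoc, ← mul_pow, inv_mul_cancel₀ hc, one_pow, one_mul]

theorem sum_inv_pow_mul_sq_add_mul_pow {K : Type*} [Field K] [CharP K 2] {c : K} (hc0 : c ≠ 0)
    {m : ℕ} (hc : c ^ 2 ^ m = c) (s : K) :
    ∑ j ∈ range m, c⁻¹ ^ (2 ^ (j + 1) - 1) * (s ^ 2 + c * s) ^ 2 ^ j = s ^ 2 ^ m + s := by
  have term (j : ℕ) : c⁻¹ ^ (2 ^ (j + 1) - 1) * (s ^ 2 + c * s) ^ 2 ^ j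
      = c * ((s / c) ^ 2 - s / c) ^ 2 ^ j := by
    have factor : s ^ 2 + c * s = c ^ 2 * ((s / c) ^ 2 - s / c) := by
      field_simp
      rw [CharTwo.sub_eq_add]
    rw [factor, mul_pow, ← pow_mul, ← pow_succ', ← mul_assoc,
      inv_pow_sub_one_mul_pow hc0 (pow_ne_zero _ two_ne_zero)]
  simp_rw [term]
  rw [← mul_sum, sum_range_pow_sub_self_pow_expChar_pow, div_pow, hc, mul_sub,
    mul_div_cancel₀ _ hc0, mul_div_cancel₀ _ hc0, CharTwo.sub_eq_add]

theorem kernel_permutation_inverse_general (m n : ℕ) (hn : Odd n)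
    (K : Type*) [Field K] [Fintype K] (hcard : Fintype.card K = 2 ^ (m * n))
    (c : K) (hcF : c ^ 2 ^ m = c) (hc0 : c ≠ 0)
    (P Q : K → K)
    (hP : ∀ x : K, P x = x ^ 2 + c * x)
    (hQ : ∀ x : K, Q x = ∑ j ∈ Finset.range m,
      c⁻¹ ^ (2 ^ (j + 1) - 1) *
        (∑ k ∈ Finset.range ((n - 1) / 2 + 1), x ^ (2 ^ m) ^ (2 * k)) ^ 2 ^ j) :
    Set.BijOn P {x : K | fieldTr (2 ^ m) n x = 0} {x : K | fieldTr (2 ^ m) n x = 0}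
    ∧ ∀ x : K, fieldTr (2 ^ m) n x = 0 → Q (P x) = x := by
  have : Fact (Nat.Prime 2) := ⟨Nat.prime_two⟩
  have : CharP K 2 := charP_of_card_eq_prime_pow hcard
  have hinv : ∀ x : K, fieldTr (2 ^ m) n x = 0 → Q (P x) = x := by
    intro x hx
    have hfix : x ^ (2 ^ m) ^ n = x := by rw [← pow_mul, ← hcard, FiniteField.pow_card]
    rw [hQ, hP, sum_pow_add_mul_pow_pow hcF _ (2 * ·), sum_inv_pow_mul_sq_add_mul_pow hc0 hcF,
      add_comm, sum_even_add_pow_eq_fieldTr_add hn hfix, hx, zero_add]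
  have hmaps : Set.MapsTo P {x | fieldTr (2 ^ m) n x = 0} {x | fieldTr (2 ^ m) n x = 0} := by
    intro x hx
    rw [Set.mem_ofPred_eq, hP, fieldTr_pow_add_mul hcF, hx.out]
    ring
  exact ⟨((Set.toFinite _).injOn_iff_bijOn_of_mapsTo hmaps).mp (Set.LeftInvOn.injOn hinv), hinv⟩

/-- For `q = 2^m`, `n` odd and `c ∈ F_q^*`, the map `P_c(x) = x² + c·x` permutes
`ker Tr ⊆ F_{q^n}`, and `Q(x) = ∑_{j=0}^{m-1} c^{-(2^{j+1}-1)} (∑_{k=0}^{(n-1)/2} x^{q^{2k}})^{2^j}`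
is its compositional inverse on `ker Tr`. -/
theorem kernel_permutation_inverse (m n : ℕ) (hm : 1 ≤ m) (hn : Odd n)
    (K : Type*) [Field K] [Fintype K] (hcard : Fintype.card K = 2 ^ (m * n))
    (c : K) (hcF : c ^ 2 ^ m = c) (hc0 : c ≠ 0)
    (P Q : K → K)
    (hP : ∀ x : K, P x = x ^ 2 + c * x)
    (hQ : ∀ x : K, Q x = ∑ j ∈ Finset.range m,
      c⁻¹ ^ (2 ^ (j + 1) - 1) *
        (∑ k ∈ Finset.range ((n - 1) / 2 + 1), x ^ (2 ^ m) ^ (2 * k)) ^ 2 ^ j) :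
    Set.BijOn P {x : K | fieldTr (2 ^ m) n x = 0} {x : K | fieldTr (2 ^ m) n x = 0}
    ∧ ∀ x : K, fieldTr (2 ^ m) n x = 0 → Q (P x) = x :=
  kernel_permutation_inverse_general m n hn K hcard c hcF hc0 P Q hP hQ
end
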